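/- Let G be a group with finite symmetric generating set X equipped with a linear order, and order the words over X by the induced shortlex ordering (shorter words precede longer ones; words of equal length are compared lexicographically). Let W be the set of words over X that are shortlex-least among all words representing the same element of G. Let R be a binary relation on words over X satisfying: (D1) if R(u,v) then u and v represent the same element of G; (D2) if u, v ∈ W, x is a letter of X or the empty word, and ux represents the same element as v, then R(ux, v); (D3) if R(u,v) then R(wu, wv) for every word w, and if moreover |u| = |v| then R(wuw', wvw') for all words w, w'. Let L be a set of words over X satisfying: (i) L is closed under taking prefixes; (ii) W ⊆ L; (iii) if R(u,v) and |u| = |v| then u ∈ L ↔ v ∈ L; (iv) if R(u,v) and |u| > |v| then u ∉ L. Then L = Geo(G,X). -/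

import Mathlib

/-- `pre_{k-1}`, `suf_{k-1}` and `sub_k` agree: the equivalence `∼_k` on words. -/
def SimK {A : Type*} (k : ℕ) (u v : List A) : Prop :=
  u.take (k - 1) = v.take (k - 1) ∧
  u.drop (u.length - (k - 1)) = v.drop (v.length - (k - 1)) ∧
  ∀ s : List A, s.length = k → (s <:+: u ↔ s <:+: v)

/-- A language `L` is `k`-locally testable if membership is invariant under `∼_k`. -/
def LocallyTestable {A : Type*} (k : ℕ) (L : Set (List A)) : Prop :=
  ∀ u v : List A, SimK k u v → (u ∈ L ↔ v ∈ L)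

/-- The syntactic congruence of a language: `u ∼_L v` iff `sut ∈ L ↔ svt ∈ L` for all `s, t`. -/
def SynCong {A : Type*} (L : Set (List A)) (u v : List A) : Prop :=
  ∀ s t : List A, s ++ u ++ t ∈ L ↔ s ++ v ++ t ∈ L

/-- The element of `G` represented by a word over the generating set `X`. -/
def wordProd {G : Type*} [Group G] {X : Set G} (w : List X) : G :=
  (w.map Subtype.val).prod

/-- A word over `X` is geodesic if no word representing the same element is shorter. -/
def IsGeodesic {G : Type*} [Group G] (X : Set G) (w : List X) : Prop :=
  ∀ v : List X, wordProd v = wordProd w → w.length ≤ v.length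

/-- The language of all geodesic words over `X`. -/
def Geo {G : Type*} [Group G] (X : Set G) : Set (List X) :=
  {w | IsGeodesic X w}

/-- The `j`-th power of a word in the free monoid (concatenation of `j` copies). -/
def listPow {A : Type*} (w : List A) : ℕ → List A
  | 0 => []
  | n + 1 => w ++ listPow w n

/-- The shortlex order on words: shorter words come first, and words of equal length
are compared lexicographically. -/
def ShortLexLt {A : Type*} [LinearOrder A] (u v : List A) : Prop :=
  u.length < v.length ∨ (u.length = v.length ∧ List.Lex (· < ·) u v)


/- Shortlex-least representatives are geodesic. If `u ++ [x]` is geodesic and `w`, `v` are the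
shortlex-least representatives of `u` and `u ++ [x]`, then `w ++ [x]` and `v` have the same length,
so by (D2), (D3) and (iii) they can be exchanged in front of any suffix without changing membership
in `L`. Walking along a geodesic letter by letter therefore shows that a geodesic lies in `L` iff
its shortlex-least representative does, and the latter is in `L` by (ii). Conversely, if
`u ++ [x] ∈ L` with `u` geodesic (induction, using (i)), the same exchange puts `w ++ [x]` in `L`;
by (D2) and (iv) the representative `v` is then not shorter than `u ++ [x]`, which is therefore
geodesic. -/

section ShortLex

variable {G : Type*} [Group G] {X : Set G}

lemma wordProd_append (u v : List X) : wordProd (u ++ v) = wordProd u * wordProd v := by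
  simp [wordProd]

lemma isGeodesic_nil : IsGeodesic X [] := fun _ _ => Nat.zero_le _

lemma IsGeodesic.of_append {u v : List X} (h : IsGeodesic X (u ++ v)) : IsGeodesic X u := by
  intro u' hu'
  have := h (u' ++ v) (by rw [wordProd_append, wordProd_append, hu'])
  simp only [List.length_append] at this
  omega

lemma ShortLexLt.length_le {A : Type*} [LinearOrder A] {u v : List A} (h : ShortLexLt u v) :
    u.length ≤ v.length :=
  h.elim le_of_lt fun h => h.1.le

variable [LinearOrder X]

def IsShortLexLeast (w : List X) : Prop :=
  ∀ v : List X, wordProd v = wordProd w → w = v ∨ ShortLexLt w v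

lemma IsShortLexLeast.length_le {w v : List X} (hw : IsShortLexLeast w)
    (hv : wordProd v = wordProd w) : w.length ≤ v.length :=
  (hw v hv).elim (fun h => h ▸ le_rfl) ShortLexLt.length_le

lemma IsShortLexLeast.length_eq {w u : List X} (hw : IsShortLexLeast w) (hu : IsGeodesic X u)
    (hwu : wordProd w = wordProd u) : w.length = u.length :=
  le_antisymm (hw.length_le hwu.symm) (hu w hwu)

lemma IsShortLexLeast.isGeodesic_of_length_le {w u : List X} (hw : IsShortLexLeast w)
    (hwu : wordProd w = wordProd u) (hlen : u.length ≤ w.length) : IsGeodesic X u :=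
  fun _ hv => hlen.trans (hw.length_le (hv.trans hwu.symm))

lemma IsShortLexLeast.eq_nil {w : List X} (hw : IsShortLexLeast w) (h1 : wordProd w = 1) :
    w = [] :=
  List.length_eq_zero_iff.mp (hw.length_eq isGeodesic_nil h1)

/-- Over a finite alphabet the lexicographic order on words of a fixed length is a finite linear
order, so every element has a shortlex-least representative. -/
lemma exists_isShortLexLeast (hfin : X.Finite) (u : List X) :
    ∃ w : List X, wordProd w = wordProd u ∧ IsShortLexLeast w := by
  classical
  have : Finite X := hfin.to_subtype
  have hex : ∃ n, ∃ v : List X, wordProd v = wordProd u ∧ v.length = n := ⟨_, u, rfl, rfl⟩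
  set T : Set (List X) := {v | wordProd v = wordProd u ∧ v.length = Nat.find hex}
  have hT : T.Finite := (List.finite_length_eq X (Nat.find hex)).subset fun _ hv => hv.2
  obtain ⟨w, ⟨hwu, hwlen⟩, hwmin⟩ := Set.exists_min_image T id hT (Nat.find_spec hex)
  refine ⟨w, hwu, fun v hv => ?_⟩
  have hvu : wordProd v = wordProd u := hv.trans hwu
  rcases (Nat.find_min' hex ⟨v, hvu, rfl⟩).lt_or_eq with hlt | heq
  · exact .inr (.inl (hwlen ▸ hlt))
  · rcases (hwmin v ⟨hvu, heq.symm⟩).lt_or_eq with hlt | rfl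
    · exact .inr (.inr ⟨hwlen.trans heq, hlt⟩)
    · exact .inl rfl

variable {L : Set (List X)}

lemma append_mem_iff_of_isGeodesic (hfin : X.Finite)
    (hstep : ∀ (w v : List X) (x : X), IsShortLexLeast w → IsShortLexLeast v →
      wordProd (w ++ [x]) = wordProd v → (w ++ [x]).length = v.length →
      ∀ s, (w ++ [x] ++ s ∈ L ↔ v ++ s ∈ L))
    {u : List X} (hu : IsGeodesic X u) {w : List X} (hw : IsShortLexLeast w)
    (hwu : wordProd w = wordProd u) (s : List X) : u ++ s ∈ L ↔ w ++ s ∈ L := by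
  induction u using List.reverseRecOn generalizing w s with
  | nil => rw [hw.eq_nil hwu]
  | append_singleton u x ih =>
    obtain ⟨w', hw'u, hw'⟩ := exists_isShortLexLeast hfin u
    have hlen : (w' ++ [x]).length = w.length := by
      simp [hw'.length_eq hu.of_append hw'u, hw.length_eq hu hwu]
    have hprod : wordProd (w' ++ [x]) = wordProd w := by
      rw [wordProd_append, hw'u, ← wordProd_append, hwu]
    calc u ++ [x] ++ s ∈ L ↔ w' ++ ([x] ++ s) ∈ L := by
          rw [List.append_assoc]; exact ih hu.of_append hw' hw'u _
      _ ↔ w ++ s ∈ L := by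
          rw [← List.append_assoc]; exact hstep w' w x hw' hw hprod hlen s

lemma isGeodesic_of_mem (hfin : X.Finite) (R : List X → List X → Prop)
    (hprefix : ∀ u v : List X, u ++ v ∈ L → u ∈ L)
    (hR : ∀ (w v : List X) (x : X), IsShortLexLeast w → IsShortLexLeast v →
      wordProd (w ++ [x]) = wordProd v → R (w ++ [x]) v)
    (hshorter : ∀ u v : List X, R u v → v.length < u.length → u ∉ L)
    (hstep : ∀ (w v : List X) (x : X), IsShortLexLeast w → IsShortLexLeast v →
      wordProd (w ++ [x]) = wordProd v → (w ++ [x]).length = v.length →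
      ∀ s, (w ++ [x] ++ s ∈ L ↔ v ++ s ∈ L))
    {u : List X} (hu : u ∈ L) : IsGeodesic X u := by
  induction u using List.reverseRecOn with
  | nil => exact isGeodesic_nil
  | append_singleton u x ih =>
    have hgeo : IsGeodesic X u := ih (hprefix u [x] hu)
    obtain ⟨w', hw'u, hw'⟩ := exists_isShortLexLeast hfin u
    obtain ⟨w, hwu, hw⟩ := exists_isShortLexLeast hfin (u ++ [x])
    have hprod : wordProd (w' ++ [x]) = wordProd w := by
      rw [wordProd_append, hw'u, ← wordProd_append, hwu]
    have hmem : w' ++ [x] ∈ L := by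
      simpa using (append_mem_iff_of_isGeodesic hfin hstep hgeo hw' hw'u [x]).1 hu
    have hlen : (w' ++ [x]).length ≤ w.length :=
      not_lt.1 fun hlt => hshorter _ _ (hR w' w x hw' hw hprod) hlt hmem
    rw [List.length_append, hw'.length_eq hgeo hw'u, ← List.length_append] at hlen
    exact hw.isGeodesic_of_length_le hwu hlen

end ShortLex

theorem stmt12_general {G : Type*} [Group G] (X : Set G) [LinearOrder X]
    (hfin : X.Finite)
    (W : Set (List X))
    (hW : W = {w : List X | ∀ v : List X, wordProd v = wordProd w →
      w = v ∨ ShortLexLt w v})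
    (R : List X → List X → Prop)
    (hD2 : ∀ u v : List X, u ∈ W → v ∈ W → ∀ x : List X, x.length ≤ 1 →
      wordProd (u ++ x) = wordProd v → R (u ++ x) v)
    (hD3b : ∀ u v : List X, R u v → u.length = v.length →
      ∀ w w' : List X, R (w ++ u ++ w') (w ++ v ++ w'))
    (L : Set (List X))
    (hi : ∀ u v : List X, u ++ v ∈ L → u ∈ L)
    (hii : W ⊆ L)
    (hiii : ∀ u v : List X, R u v → u.length = v.length → (u ∈ L ↔ v ∈ L))
    (hiv : ∀ u v : List X, R u v → v.length < u.length → u ∉ L) :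
    L = Geo X := by
  subst hW
  have hR : ∀ (w v : List X) (x : X), IsShortLexLeast w → IsShortLexLeast v →
      wordProd (w ++ [x]) = wordProd v → R (w ++ [x]) v :=
    fun w v x hw hv => hD2 w v hw hv [x] le_rfl
  have hstep : ∀ (w v : List X) (x : X), IsShortLexLeast w → IsShortLexLeast v →
      wordProd (w ++ [x]) = wordProd v → (w ++ [x]).length = v.length →
      ∀ s, (w ++ [x] ++ s ∈ L ↔ v ++ s ∈ L) := fun w v x hw hv hprod hlen s =>
    hiii _ _ (by simpa using hD3b _ _ (hR w v x hw hv hprod) hlen [] s)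
      (by simp only [List.length_append] at hlen ⊢; omega)
  ext u
  refine ⟨isGeodesic_of_mem hfin R hi hR hiv hstep, fun hu => ?_⟩
  obtain ⟨w, hwu, hw⟩ := exists_isShortLexLeast hfin u
  have hmem := (append_mem_iff_of_isGeodesic hfin hstep hu hw hwu []).2
  simp only [List.append_nil] at hmem
  exact hmem (hii hw)

/-- Word acceptor correctness criterion: if `W` is the set of shortlex-least
representative words, `R` is a relation on words satisfying (D1)–(D3), and `L` is a
set of words satisfying (i)–(iv), then `L` is exactly the set of geodesic words. -/
theorem stmt12 {G : Type*} [Group G] (X : Set G) [LinearOrder X]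
    (hfin : X.Finite) (hsym : ∀ x ∈ X, x⁻¹ ∈ X) (hgen : Subgroup.closure X = ⊤)
    (W : Set (List X))
    (hW : W = {w : List X | ∀ v : List X, wordProd v = wordProd w →
      w = v ∨ ShortLexLt w v})
    (R : List X → List X → Prop)
    (hD1 : ∀ u v : List X, R u v → wordProd u = wordProd v)
    (hD2 : ∀ u v : List X, u ∈ W → v ∈ W → ∀ x : List X, x.length ≤ 1 →
      wordProd (u ++ x) = wordProd v → R (u ++ x) v)
    (hD3a : ∀ u v : List X, R u v → ∀ w : List X, R (w ++ u) (w ++ v))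
    (hD3b : ∀ u v : List X, R u v → u.length = v.length →
      ∀ w w' : List X, R (w ++ u ++ w') (w ++ v ++ w'))
    (L : Set (List X))
    (hi : ∀ u v : List X, u ++ v ∈ L → u ∈ L)
    (hii : W ⊆ L)
    (hiii : ∀ u v : List X, R u v → u.length = v.length → (u ∈ L ↔ v ∈ L))
    (hiv : ∀ u v : List X, R u v → v.length < u.length → u ∉ L) :
    L = Geo X :=
  stmt12_general X hfin W hW R hD2 hD3b L hi hii hiii hiv
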